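/- Scalar Chernoff bound from ℓ∞-independence: let ξ ∈ {0,1}^n be k-homogeneous and ℓ∞-independent with parameter D, and let c₁,…,cₙ ∈ [0,1], f(ξ) = Σ_i c_i ξ_i, m = E[f(ξ)]. Then for all 0 ≤ δ ≤ 1, Pr[ f(ξ) ≥ (1+δ)m ] ≤ exp(−δ²m/(20D²)) and Pr[ f(ξ) ≤ (1−δ)m ] ≤ exp(−δ²m/(20D²)). -/

import Mathlib

open scoped Classical
open Finset

/-- Probability of an event under a distribution `μ` on `{0,1}^n`. -/
noncomputable def pr {n : ℕ} (μ : (Fin n → Bool) → ℝ) (E : (Fin n → Bool) → Prop) : ℝ :=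
  ∑ ξ : Fin n → Bool, if E ξ then μ ξ else 0

/-- The event that all coordinates in `S` equal `1`. -/
def condOn {n : ℕ} (S : Finset (Fin n)) (ξ : Fin n → Bool) : Prop :=
  ∀ i ∈ S, ξ i = true

/-- The marginal of coordinate `j` conditional on all coordinates of `S` being `1`
(junk value `0` when the conditioning is infeasible). -/
noncomputable def cm {n : ℕ} (μ : (Fin n → Bool) → ℝ) (S : Finset (Fin n)) (j : Fin n) : ℝ :=
  pr μ (fun ξ => condOn S ξ ∧ ξ j = true) / pr μ (condOn S)

/-- `μ` is a probability distribution. -/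
def IsDistrib {n : ℕ} (μ : (Fin n → Bool) → ℝ) : Prop :=
  (∀ ξ, 0 ≤ μ ξ) ∧ ∑ ξ : Fin n → Bool, μ ξ = 1

/-- `μ` is `k`-homogeneous: every outcome has exactly `k` ones. -/
def Homog {n : ℕ} (μ : (Fin n → Bool) → ℝ) (k : ℕ) : Prop :=
  ∀ ξ, μ ξ ≠ 0 → (Finset.univ.filter fun i => ξ i = true).card = k

/-- (One-sided) `ℓ∞`-independence with parameter `D`: for every feasible conditioning on
a set `S` of coordinates being `1` and every feasible `v`, the total `ℓ₁` change in
marginals caused by further conditioning on `ξ_v = 1` is at most `D`. -/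
def LinfIndep {n : ℕ} (μ : (Fin n → Bool) → ℝ) (D : ℝ) : Prop :=
  ∀ (S : Finset (Fin n)) (v : Fin n), 0 < pr μ (condOn (insert v S)) →
    ∑ j : Fin n, |cm μ (insert v S) j - cm μ S j| ≤ D

/-! ### Auxiliary definitions -/

noncomputable def ex {n : ℕ} (μ g : (Fin n → Bool) → ℝ) : ℝ := ∑ ξ, μ ξ * g ξ

noncomputable def fce {n : ℕ} (c : Fin n → ℝ) (ξ : Fin n → Bool) : ℝ :=
  ∑ i, c i * (if ξ i = true then (1 : ℝ) else 0)

noncomputable def marg {n : ℕ} (μ : (Fin n → Bool) → ℝ) (j : Fin n) : ℝ :=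
  ∑ ξ, μ ξ * (if ξ j = true then (1:ℝ) else 0)

noncomputable def cnd {n : ℕ} (μ : (Fin n → Bool) → ℝ) (v : Fin n) :
    (Fin n → Bool) → ℝ :=
  fun ξ => if ξ v = true then μ ξ / marg μ v else 0

/-! ### Basic lemmas -/

variable {n : ℕ}

lemma pr_congr {μ : (Fin n → Bool) → ℝ} {P Q : (Fin n → Bool) → Prop}
    (h : ∀ ξ, P ξ ↔ Q ξ) : pr μ P = pr μ Q := by
  unfold pr; exact Finset.sum_congr rfl fun ξ _ => by
    by_cases hP : P ξ
    · rw [if_pos hP, if_pos ((h ξ).1 hP)]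
    · rw [if_neg hP, if_neg (fun hQ => hP ((h ξ).2 hQ))]

lemma pr_nonneg {μ : (Fin n → Bool) → ℝ} (h0 : ∀ ξ, 0 ≤ μ ξ)
    (P : (Fin n → Bool) → Prop) : 0 ≤ pr μ P := by
  unfold pr; exact Finset.sum_nonneg fun ξ _ => by
    by_cases hP : P ξ
    · rw [if_pos hP]; exact h0 ξ
    · rw [if_neg hP]


lemma pr_eq_sum_mul {μ : (Fin n → Bool) → ℝ} (P : (Fin n → Bool) → Prop) :
    pr μ P = ∑ ξ, μ ξ * (if P ξ then (1:ℝ) else 0) := by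
  unfold pr; exact Finset.sum_congr rfl fun ξ _ => by
    by_cases hP : P ξ <;> simp [hP]

lemma marg_def (μ : (Fin n → Bool) → ℝ) (j : Fin n) :
    marg μ j = ∑ ξ, μ ξ * (if ξ j = true then (1:ℝ) else 0) := rfl

lemma pr_condOn_empty {μ : (Fin n → Bool) → ℝ} (hμ : IsDistrib μ) :
    pr μ (condOn (∅ : Finset (Fin n))) = 1 := by
  have : pr μ (condOn (∅ : Finset (Fin n))) = ∑ ξ, μ ξ := by
    unfold pr; exact Finset.sum_congr rfl fun ξ _ => by simp [condOn]
  rw [this, hμ.2]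

lemma condOn_insert {S : Finset (Fin n)} {v : Fin n} (ξ : Fin n → Bool) :
    condOn (insert v S) ξ ↔ condOn S ξ ∧ ξ v = true := by
  unfold condOn
  rw [Finset.forall_mem_insert]
  tauto

lemma marg_eq_pr {μ : (Fin n → Bool) → ℝ} (j : Fin n) :
    marg μ j = pr μ (fun ξ => ξ j = true) := by
  unfold marg pr; exact Finset.sum_congr rfl fun ξ _ => by
    by_cases h : ξ j = true
    · rw [if_pos h, if_pos h, mul_one]
    · rw [if_neg h, if_neg h, mul_zero]

lemma pr_condOn_singleton {μ : (Fin n → Bool) → ℝ} (v : Fin n) :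
    pr μ (condOn ({v} : Finset (Fin n))) = marg μ v := by
  rw [marg_eq_pr]; exact pr_congr fun ξ => by simp [condOn]

lemma cm_empty {μ : (Fin n → Bool) → ℝ} (hμ : IsDistrib μ) (j : Fin n) :
    cm μ (∅ : Finset (Fin n)) j = marg μ j := by
  unfold cm
  rw [pr_condOn_empty hμ, div_one, marg_eq_pr]
  exact pr_congr fun ξ => by simp [condOn]

lemma marg_nonneg {μ : (Fin n → Bool) → ℝ} (h0 : ∀ ξ, 0 ≤ μ ξ) (j : Fin n) :
    0 ≤ marg μ j := by rw [marg_eq_pr]; exact pr_nonneg h0 _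

lemma sum_ones (ξ : Fin n → Bool) :
    ∑ i, (if ξ i = true then (1:ℝ) else 0)
      = ((Finset.univ.filter fun i => ξ i = true).card : ℝ) := by
  rw [Finset.sum_boole]

lemma sum_marg {μ : (Fin n → Bool) → ℝ} {k : ℕ} (hμ : IsDistrib μ) (hhom : Homog μ k) :
    ∑ j, marg μ j = (k : ℝ) := by
  have h1 : ∑ j, marg μ j = ∑ ξ, μ ξ * ∑ j, (if ξ j = true then (1:ℝ) else 0) := by
    simp_rw [marg, Finset.mul_sum]
    exact Finset.sum_comm
  have h2 : ∀ ξ : Fin n → Bool, μ ξ * ∑ j, (if ξ j = true then (1:ℝ) else 0) = μ ξ * k := by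
    intro ξ
    by_cases hz : μ ξ = 0
    · rw [hz, zero_mul, zero_mul]
    · rw [sum_ones, hhom ξ hz]
  rw [h1, Finset.sum_congr rfl fun ξ _ => h2 ξ, ← Finset.sum_mul, hμ.2, one_mul]

lemma marg_forced {μ : (Fin n → Bool) → ℝ} {S : Finset (Fin n)} (hμ : IsDistrib μ)
    (hforce : ∀ ξ, μ ξ ≠ 0 → ∀ i ∈ S, ξ i = true) {i : Fin n} (hi : i ∈ S) :
    marg μ i = 1 := by
  have : marg μ i = ∑ ξ, μ ξ := by
    unfold marg; exact Finset.sum_congr rfl fun ξ _ => by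
      by_cases hz : μ ξ = 0
      · rw [hz, zero_mul]
      · rw [if_pos (hforce ξ hz i hi), mul_one]
  rw [this, hμ.2]

lemma ex_fce {μ : (Fin n → Bool) → ℝ} (c : Fin n → ℝ) :
    ex μ (fce c) = ∑ j, c j * marg μ j := by
  unfold ex fce marg
  simp_rw [Finset.mul_sum]
  rw [Finset.sum_comm]
  exact Finset.sum_congr rfl fun j _ => Finset.sum_congr rfl fun ξ _ => by ring

lemma fce_nonneg {c : Fin n → ℝ} (hc0 : ∀ i, 0 ≤ c i) (ξ : Fin n → Bool) :
    0 ≤ fce c ξ :=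
  Finset.sum_nonneg fun i _ => mul_nonneg (hc0 i) (by positivity)

lemma ex_fce_nonneg {μ : (Fin n → Bool) → ℝ} {c : Fin n → ℝ}
    (h0 : ∀ ξ, 0 ≤ μ ξ) (hc0 : ∀ i, 0 ≤ c i) : 0 ≤ ex μ (fce c) :=
  Finset.sum_nonneg fun ξ _ => mul_nonneg (h0 ξ) (fce_nonneg hc0 ξ)

/-! ### Conditional distribution lemmas -/

lemma div_div_helper (A B p : ℝ) (hp : p ≠ 0) : (A/p)/(B/p) = A/B := by
  rcases eq_or_ne B 0 with h | h
  · simp [h]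
  · field_simp

lemma pr_cnd {μ : (Fin n → Bool) → ℝ} {v : Fin n} (P : (Fin n → Bool) → Prop) :
    pr (cnd μ v) P = pr μ (fun ξ => P ξ ∧ ξ v = true) / marg μ v := by
  unfold pr cnd
  rw [Finset.sum_div]
  exact Finset.sum_congr rfl fun ξ _ => by
    by_cases hP : P ξ
    · by_cases hv : ξ v = true
      · rw [if_pos hP, if_pos hv, if_pos ⟨hP, hv⟩]
      · rw [if_pos hP, if_neg hv, if_neg (fun h => hv h.2), zero_div]
    · rw [if_neg hP, if_neg (fun h => hP h.1), zero_div]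

lemma cm_cnd {μ : (Fin n → Bool) → ℝ} {v : Fin n} (hp : 0 < marg μ v)
    (T : Finset (Fin n)) (j : Fin n) :
    cm (cnd μ v) T j = cm μ (insert v T) j := by
  unfold cm
  rw [pr_cnd, pr_cnd]
  rw [div_div_helper _ _ _ (ne_of_gt hp)]
  congr 1
  · exact pr_congr fun ξ => by rw [condOn_insert]; tauto
  · exact pr_congr fun ξ => (condOn_insert ξ).symm

lemma cnd_isDistrib {μ : (Fin n → Bool) → ℝ} {v : Fin n} (hμ : IsDistrib μ)
    (hp : 0 < marg μ v) : IsDistrib (cnd μ v) := by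
  constructor
  · intro ξ
    unfold cnd
    by_cases hv : ξ v = true
    · rw [if_pos hv]; exact div_nonneg (hμ.1 ξ) hp.le
    · rw [if_neg hv]
  · have h1 : ∑ ξ, cnd μ v ξ = (∑ ξ, μ ξ * (if ξ v = true then (1:ℝ) else 0)) / marg μ v := by
      unfold cnd
      rw [Finset.sum_div]
      exact Finset.sum_congr rfl fun ξ _ => by
        by_cases hv : ξ v = true
        · rw [if_pos hv, if_pos hv, mul_one]
        · rw [if_neg hv, if_neg hv, mul_zero, zero_div]
    rw [h1, ← marg, div_self (ne_of_gt hp)]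

lemma cnd_homog {μ : (Fin n → Bool) → ℝ} {v : Fin n} {k : ℕ} (hhom : Homog μ k) :
    Homog (cnd μ v) k := by
  intro ξ hξ
  apply hhom
  intro h0
  apply hξ
  unfold cnd
  rw [h0, zero_div]
  simp

lemma cnd_ne_zero {μ : (Fin n → Bool) → ℝ} {v : Fin n} {ξ : Fin n → Bool}
    (hξ : cnd μ v ξ ≠ 0) : μ ξ ≠ 0 ∧ ξ v = true := by
  by_cases hv : ξ v = true
  · refine ⟨fun h0 => hξ ?_, hv⟩
    unfold cnd; rw [h0, zero_div]; simp
  · exact absurd (by unfold cnd; rw [if_neg hv]) hξ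

lemma cnd_linf {μ : (Fin n → Bool) → ℝ} {v : Fin n} {D : ℝ} (hind : LinfIndep μ D)
    (hp : 0 < marg μ v) : LinfIndep (cnd μ v) D := by
  intro T w hfeas
  have h1 : ∀ j, cm (cnd μ v) (insert w T) j = cm μ (insert w (insert v T)) j := by
    intro j
    rw [cm_cnd hp, Finset.insert_comm]
  have h2 : ∀ j, cm (cnd μ v) T j = cm μ (insert v T) j := fun j => cm_cnd hp T j
  have hfeas' : 0 < pr μ (condOn (insert w (insert v T))) := by
    rw [pr_cnd] at hfeas
    have := mul_pos hfeas hp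
    rw [div_mul_cancel₀ _ (ne_of_gt hp)] at this
    calc (0:ℝ) < pr μ fun ξ => condOn (insert w T) ξ ∧ ξ v = true := this
      _ = pr μ (condOn (insert w (insert v T))) := by
          refine pr_congr fun ξ => ?_
          rw [Finset.insert_comm]
          simp only [condOn_insert]
          try tauto
  have := hind (insert v T) w hfeas'
  calc ∑ j, |cm (cnd μ v) (insert w T) j - cm (cnd μ v) T j|
      = ∑ j, |cm μ (insert w (insert v T)) j - cm μ (insert v T) j| := by
        exact Finset.sum_congr rfl fun j _ => by rw [h1 j, h2 j]
    _ ≤ D := this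
/-! ### Pair expectations and covariance bounds -/

noncomputable def epair {n : ℕ} (μ : (Fin n → Bool) → ℝ) (v j : Fin n) : ℝ :=
  ∑ ξ, μ ξ * ((if ξ v = true then (1:ℝ) else 0) * (if ξ j = true then (1:ℝ) else 0))

lemma epair_symm (μ : (Fin n → Bool) → ℝ) (v j : Fin n) : epair μ v j = epair μ j v := by
  unfold epair
  exact Finset.sum_congr rfl fun ξ _ => by ring

lemma epair_nonneg {μ : (Fin n → Bool) → ℝ} (h0 : ∀ ξ, 0 ≤ μ ξ) (v j : Fin n) :
    0 ≤ epair μ v j :=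
  Finset.sum_nonneg fun ξ _ => mul_nonneg (h0 ξ) (by positivity)

lemma epair_le_marg {μ : (Fin n → Bool) → ℝ} (h0 : ∀ ξ, 0 ≤ μ ξ) (v j : Fin n) :
    epair μ v j ≤ marg μ j := by
  rw [marg_def]
  refine Finset.sum_le_sum fun ξ _ => ?_
  refine mul_le_mul_of_nonneg_left ?_ (h0 ξ)
  by_cases hv : ξ v = true
  · rw [if_pos hv, one_mul]
  · rw [if_neg hv, zero_mul]
    by_cases hj : ξ j = true
    · rw [if_pos hj]; norm_num
    · rw [if_neg hj]

lemma mul_marg_cnd {μ : (Fin n → Bool) → ℝ} {v : Fin n} (hp : 0 < marg μ v) (j : Fin n) :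
    marg μ v * marg (cnd μ v) j = epair μ v j := by
  have hp' := ne_of_gt hp
  rw [marg_def (cnd μ v) j, Finset.mul_sum]
  unfold epair
  refine Finset.sum_congr rfl fun ξ _ => ?_
  unfold cnd
  by_cases hv : ξ v = true <;> by_cases hj : ξ j = true <;>
    simp [hv, hj] <;> try field_simp <;> try ring

lemma marg_cnd_eq {μ : (Fin n → Bool) → ℝ} {v : Fin n} (hp : 0 < marg μ v) (j : Fin n) :
    marg (cnd μ v) j = epair μ v j / marg μ v := by
  rw [eq_div_iff (ne_of_gt hp), mul_comm, mul_marg_cnd hp]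

lemma cm_singleton {μ : (Fin n → Bool) → ℝ} {j : Fin n} (hp : 0 < marg μ j) (v : Fin n) :
    cm μ ({j} : Finset (Fin n)) v = epair μ j v / marg μ j := by
  unfold cm
  rw [pr_condOn_singleton]
  congr 1
  have : epair μ j v = pr μ (fun ξ => condOn {j} ξ ∧ ξ v = true) := by
    rw [pr_eq_sum_mul]
    unfold epair
    refine Finset.sum_congr rfl fun ξ _ => ?_
    by_cases hj : ξ j = true <;> by_cases hv : ξ v = true <;>
      simp [condOn, hj, hv]
  rw [this]

lemma mul_cm_singleton {μ : (Fin n → Bool) → ℝ} {j : Fin n} (hp : 0 < marg μ j) (v : Fin n) :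
    marg μ j * cm μ ({j} : Finset (Fin n)) v = epair μ v j := by
  rw [cm_singleton hp v, mul_comm, div_mul_cancel₀ _ (ne_of_gt hp), epair_symm]

/-- Key covariance bound from ℓ∞-independence (symmetrization). -/
lemma cov_bound {μ : (Fin n → Bool) → ℝ} {D : ℝ} (hμ : IsDistrib μ)
    (hind : LinfIndep μ D) (j : Fin n) (T : Finset (Fin n)) :
    ∑ v ∈ T, |epair μ v j - marg μ v * marg μ j| ≤ D * marg μ j := by
  rcases eq_or_lt_of_le (marg_nonneg hμ.1 j) with hp | hp
  · have hmz : marg μ j = 0 := hp.symm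
    have hz : ∀ v, |epair μ v j - marg μ v * marg μ j| = 0 := by
      intro v
      have h1 : epair μ v j = 0 :=
        le_antisymm ((epair_le_marg hμ.1 v j).trans_eq hmz) (epair_nonneg hμ.1 v j)
      rw [h1, hmz, mul_zero, sub_zero, abs_zero]
    rw [Finset.sum_congr rfl fun v _ => hz v, Finset.sum_const_zero, hmz, mul_zero]
  · have hfeas : 0 < pr μ (condOn (insert j (∅ : Finset (Fin n)))) := by
      have h : (insert j (∅ : Finset (Fin n))) = {j} := rfl
      rw [h, pr_condOn_singleton]; exact hp
    have hD := hind ∅ j hfeas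
    have heq : ∀ v, |epair μ v j - marg μ v * marg μ j|
        = marg μ j * |cm μ {j} v - marg μ v| := by
      intro v
      rw [← abs_of_pos hp, ← abs_mul, mul_sub, abs_of_pos hp, mul_cm_singleton hp v,
        mul_comm (marg μ j) (marg μ v)]
    calc ∑ v ∈ T, |epair μ v j - marg μ v * marg μ j|
        ≤ ∑ v, |epair μ v j - marg μ v * marg μ j| :=
          Finset.sum_le_sum_of_subset_of_nonneg (Finset.subset_univ T)
            (fun v _ _ => abs_nonneg _)
      _ = marg μ j * ∑ v, |cm μ {j} v - marg μ v| := by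
          rw [Finset.mul_sum]
          exact Finset.sum_congr rfl fun v _ => heq v
      _ ≤ marg μ j * D := by
          refine mul_le_mul_of_nonneg_left ?_ hp.le
          have h2 : ∀ v : Fin n, |cm μ {j} v - marg μ v|
              = |cm μ (insert j ∅) v - cm μ ∅ v| := by
            intro v
            rw [cm_empty hμ]
            norm_num
          rw [Finset.sum_congr rfl fun v _ => h2 v]
          exact hD
      _ = D * marg μ j := mul_comm _ _
/-! ### The revealing identity -/

lemma marg_mul_ex_cnd {μ : (Fin n → Bool) → ℝ} (h0 : ∀ ξ, 0 ≤ μ ξ) (v : Fin n)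
    (g : (Fin n → Bool) → ℝ) :
    marg μ v * ex (cnd μ v) g = ∑ ξ, (if ξ v = true then μ ξ * g ξ else 0) := by
  rcases eq_or_lt_of_le (marg_nonneg h0 v) with hp | hp
  · have hterm : ∀ ξ : Fin n → Bool, (if ξ v = true then μ ξ * g ξ else 0) = 0 := by
      intro ξ
      by_cases hv : ξ v = true
      · rw [if_pos hv]
        have : μ ξ * (if ξ v = true then (1:ℝ) else 0) = 0 := by
          refine (Finset.sum_eq_zero_iff_of_nonneg ?_).1 hp.symm ξ (Finset.mem_univ ξ)
          intro ζ _
          exact mul_nonneg (h0 ζ) (by positivity)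
        rw [if_pos hv, mul_one] at this
        rw [this, zero_mul]
      · rw [if_neg hv]
    rw [Finset.sum_congr rfl fun ξ _ => hterm ξ, Finset.sum_const_zero, ← hp, zero_mul]
  · unfold ex cnd
    rw [Finset.mul_sum]
    refine Finset.sum_congr rfl fun ξ _ => ?_
    by_cases hv : ξ v = true
    · rw [if_pos hv, if_pos hv]
      field_simp
    · rw [if_neg hv, if_neg hv, zero_mul, mul_zero]

lemma card_ones_sdiff {ξ : Fin n → Bool} {S : Finset (Fin n)} {k : ℕ}
    (hones : (Finset.univ.filter fun i => ξ i = true).card = k)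
    (hsub : S ⊆ Finset.univ.filter fun i => ξ i = true) :
    ((Finset.univ \ S).filter fun v => ξ v = true).card = k - S.card := by
  have h1 : ((Finset.univ \ S).filter fun v => ξ v = true)
      = (Finset.univ.filter fun i => ξ i = true) \ S := by
    ext i
    simp only [Finset.mem_filter, Finset.mem_sdiff, Finset.mem_univ, true_and]
    tauto
  rw [h1, Finset.card_sdiff_of_subset hsub, hones]

lemma reveal {μ : (Fin n → Bool) → ℝ} {k K : ℕ} {S : Finset (Fin n)}
    (hμ : IsDistrib μ) (hhom : Homog μ k)
    (hforce : ∀ ξ, μ ξ ≠ 0 → ∀ i ∈ S, ξ i = true)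
    (hk : k = S.card + K) (g : (Fin n → Bool) → ℝ) :
    ∑ v ∈ Finset.univ \ S, marg μ v * ex (cnd μ v) g = (K : ℝ) * ex μ g := by
  have h1 : ∑ v ∈ Finset.univ \ S, marg μ v * ex (cnd μ v) g
      = ∑ v ∈ Finset.univ \ S, ∑ ξ, (if ξ v = true then μ ξ * g ξ else 0) :=
    Finset.sum_congr rfl fun v _ => marg_mul_ex_cnd hμ.1 v g
  rw [h1, Finset.sum_comm]
  have h2 : ∀ ξ : Fin n → Bool,
      ∑ v ∈ Finset.univ \ S, (if ξ v = true then μ ξ * g ξ else 0)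
        = (K : ℝ) * (μ ξ * g ξ) := by
    intro ξ
    rw [← Finset.sum_filter]
    rw [Finset.sum_const]
    by_cases hz : μ ξ = 0
    · rw [hz, zero_mul, mul_zero, smul_zero]
    · have hsub : S ⊆ Finset.univ.filter fun i => ξ i = true := by
        intro i hi
        rw [Finset.mem_filter]
        exact ⟨Finset.mem_univ i, hforce ξ hz i hi⟩
      have hcard := card_ones_sdiff (hhom ξ hz) hsub
      rw [hcard, hk]
      simp [nsmul_eq_mul]
  rw [Finset.sum_congr rfl fun ξ _ => h2 ξ, ← Finset.mul_sum]
  rfl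

lemma sum_marg_sdiff {μ : (Fin n → Bool) → ℝ} {k K : ℕ} {S : Finset (Fin n)}
    (hμ : IsDistrib μ) (hhom : Homog μ k)
    (hforce : ∀ ξ, μ ξ ≠ 0 → ∀ i ∈ S, ξ i = true)
    (hk : k = S.card + K) :
    ∑ v ∈ Finset.univ \ S, marg μ v = (K : ℝ) := by
  rw [Finset.sum_sdiff_eq_sub (Finset.subset_univ S), sum_marg hμ hhom]
  have h1 : ∑ v ∈ S, marg μ v = (S.card : ℝ) := by
    rw [Finset.sum_congr rfl fun v hv => marg_forced hμ hforce hv]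
    simp
  rw [h1, hk]
  push_cast
  ring

lemma sum_marg_c_sdiff {μ : (Fin n → Bool) → ℝ} {S : Finset (Fin n)} (c : Fin n → ℝ)
    (hcS : ∀ i ∈ S, c i = 0) :
    ∑ v ∈ Finset.univ \ S, c v * marg μ v = ex μ (fce c) := by
  rw [ex_fce, Finset.sum_sdiff_eq_sub (Finset.subset_univ S)]
  have h1 : ∑ v ∈ S, c v * marg μ v = 0 :=
    Finset.sum_eq_zero fun v hv => by rw [hcS v hv, zero_mul]
  rw [h1, sub_zero]
/-! ### Deviation bounds for conditional means -/

lemma dev_pointwise {μ : (Fin n → Bool) → ℝ} {D : ℝ} {v : Fin n} {c : Fin n → ℝ}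
    (hμ : IsDistrib μ) (hind : LinfIndep μ D)
    (hc0 : ∀ i, 0 ≤ c i) (hc1 : ∀ i, c i ≤ 1) (hp : 0 < marg μ v) :
    |ex (cnd μ v) (fce c) - ex μ (fce c)| ≤ D := by
  have hfeas : 0 < pr μ (condOn (insert v (∅ : Finset (Fin n)))) := by
    have h : (insert v (∅ : Finset (Fin n))) = {v} := rfl
    rw [h, pr_condOn_singleton]; exact hp
  have hD := hind ∅ v hfeas
  have hdist' := cnd_isDistrib hμ hp
  have hmargs : ∀ j, marg (cnd μ v) j - marg μ j
      = cm μ (insert v ∅) j - cm μ ∅ j := by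
    intro j
    rw [cm_empty hμ, ← cm_empty hdist' j, cm_cnd hp]
  rw [ex_fce, ex_fce, ← Finset.sum_sub_distrib]
  calc |∑ j, (c j * marg (cnd μ v) j - c j * marg μ j)|
      ≤ ∑ j, |c j * marg (cnd μ v) j - c j * marg μ j| := Finset.abs_sum_le_sum_abs _ _
    _ ≤ ∑ j, |cm μ (insert v ∅) j - cm μ ∅ j| := by
        refine Finset.sum_le_sum fun j _ => ?_
        rw [← mul_sub, abs_mul, abs_of_nonneg (hc0 j), hmargs j]
        exact mul_le_of_le_one_left (abs_nonneg _) (hc1 j)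
    _ ≤ D := hD

lemma dev_weighted {μ : (Fin n → Bool) → ℝ} {D : ℝ} {S : Finset (Fin n)} {c : Fin n → ℝ}
    (hμ : IsDistrib μ) (hind : LinfIndep μ D) (hc0 : ∀ i, 0 ≤ c i) :
    ∑ v ∈ Finset.univ \ S, marg μ v * |ex (cnd μ v) (fce c) - ex μ (fce c)|
      ≤ D * ex μ (fce c) := by
  have step1 : ∀ v, marg μ v * |ex (cnd μ v) (fce c) - ex μ (fce c)|
      ≤ ∑ j, c j * |epair μ v j - marg μ v * marg μ j| := by
    intro v
    rcases eq_or_lt_of_le (marg_nonneg hμ.1 v) with hp | hp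
    · rw [← hp, zero_mul]
      exact Finset.sum_nonneg fun j _ => mul_nonneg (hc0 j) (abs_nonneg _)
    · have key : marg μ v * (ex (cnd μ v) (fce c) - ex μ (fce c))
          = ∑ j, c j * (epair μ v j - marg μ v * marg μ j) := by
        rw [ex_fce, ex_fce, ← Finset.sum_sub_distrib, Finset.mul_sum]
        refine Finset.sum_congr rfl fun j _ => ?_
        rw [← mul_marg_cnd hp j]
        ring
      calc marg μ v * |ex (cnd μ v) (fce c) - ex μ (fce c)|
          = |marg μ v * (ex (cnd μ v) (fce c) - ex μ (fce c))| := by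
            rw [abs_mul, abs_of_pos hp]
        _ = |∑ j, c j * (epair μ v j - marg μ v * marg μ j)| := by rw [key]
        _ ≤ ∑ j, |c j * (epair μ v j - marg μ v * marg μ j)| :=
            Finset.abs_sum_le_sum_abs _ _
        _ = ∑ j, c j * |epair μ v j - marg μ v * marg μ j| :=
            Finset.sum_congr rfl fun j _ => by
              rw [abs_mul, abs_of_nonneg (hc0 j)]
  calc ∑ v ∈ Finset.univ \ S, marg μ v * |ex (cnd μ v) (fce c) - ex μ (fce c)|
      ≤ ∑ v ∈ Finset.univ \ S, ∑ j, c j * |epair μ v j - marg μ v * marg μ j| :=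
        Finset.sum_le_sum fun v _ => step1 v
    _ = ∑ j, c j * ∑ v ∈ Finset.univ \ S, |epair μ v j - marg μ v * marg μ j| := by
        rw [Finset.sum_comm]
        exact Finset.sum_congr rfl fun j _ => by rw [Finset.mul_sum]
    _ ≤ ∑ j, c j * (D * marg μ j) := by
        refine Finset.sum_le_sum fun j _ => ?_
        exact mul_le_mul_of_nonneg_left (cov_bound hμ hind j _) (hc0 j)
    _ = D * ex μ (fce c) := by
        rw [ex_fce, Finset.mul_sum]
        exact Finset.sum_congr rfl fun j _ => by ring
/-! ### Splitting off one coordinate -/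

lemma fce_update (c : Fin n → ℝ) (v : Fin n) (ξ : Fin n → Bool) :
    fce c ξ = fce (Function.update c v 0) ξ + c v * (if ξ v = true then (1:ℝ) else 0) := by
  unfold fce
  rw [← Finset.add_sum_erase _ (fun i => c i * (if ξ i = true then (1:ℝ) else 0))
        (Finset.mem_univ v),
      ← Finset.add_sum_erase _
        (fun i => Function.update c v 0 i * (if ξ i = true then (1:ℝ) else 0))
        (Finset.mem_univ v)]
  rw [Function.update_self]
  have h : ∀ i ∈ Finset.univ.erase v,
      Function.update c v 0 i * (if ξ i = true then (1:ℝ) else 0)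
        = c i * (if ξ i = true then (1:ℝ) else 0) := fun i hi => by
    rw [Function.update_of_ne (Finset.mem_erase.1 hi).1]
  rw [Finset.sum_congr rfl h]
  ring

lemma ex_cnd_exp_split {μ : (Fin n → Bool) → ℝ} {v : Fin n} (c : Fin n → ℝ) (t : ℝ) :
    ex (cnd μ v) (fun ξ => Real.exp (t * fce c ξ))
      = Real.exp (t * c v)
        * ex (cnd μ v) (fun ξ => Real.exp (t * fce (Function.update c v 0) ξ)) := by
  unfold ex
  rw [Finset.mul_sum]
  refine Finset.sum_congr rfl fun ξ _ => ?_
  by_cases hz : cnd μ v ξ = 0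
  · rw [hz, zero_mul, zero_mul, mul_zero]
  · have hv := (cnd_ne_zero hz).2
    simp only []
    rw [fce_update c v ξ, if_pos hv, mul_one, mul_add, Real.exp_add]
    ring

lemma ex_cnd_fce_split {μ : (Fin n → Bool) → ℝ} {v : Fin n}
    (hμ : IsDistrib μ) (hp : 0 < marg μ v) (c : Fin n → ℝ) :
    ex (cnd μ v) (fce c) = ex (cnd μ v) (fce (Function.update c v 0)) + c v := by
  have h1 : marg (cnd μ v) v = 1 := by
    have h : marg (cnd μ v) v = ∑ ξ, cnd μ v ξ := by
      rw [marg_def]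
      refine Finset.sum_congr rfl fun ξ _ => ?_
      by_cases hz : cnd μ v ξ = 0
      · rw [hz, zero_mul]
      · rw [if_pos (cnd_ne_zero hz).2, mul_one]
    rw [h, (cnd_isDistrib hμ hp).2]
  have h2 : ex (cnd μ v) (fce c)
      = ex (cnd μ v) (fce (Function.update c v 0)) + c v * marg (cnd μ v) v := by
    unfold ex
    rw [marg_def, Finset.mul_sum, ← Finset.sum_add_distrib]
    refine Finset.sum_congr rfl fun ξ _ => ?_
    rw [fce_update c v ξ]
    ring
  rw [h2, h1, mul_one]

lemma exp_quad {z : ℝ} (hz : |z| ≤ 1) : Real.exp z ≤ 1 + z + z^2 := by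
  have h := Real.abs_exp_sub_one_sub_id_le hz
  have h2 := (abs_le.1 h).2
  linarith
/-! ### The MGF bound -/

set_option maxHeartbeats 2000000 in
lemma mgf_aux {D : ℝ} (hD : 1 ≤ D) :
    ∀ (r k : ℕ) (μ : (Fin n → Bool) → ℝ) (c : Fin n → ℝ) (S : Finset (Fin n)),
      IsDistrib μ → Homog μ k → LinfIndep μ D →
      (∀ i, 0 ≤ c i) → (∀ i, c i ≤ 1) →
      (∀ ξ, μ ξ ≠ 0 → ∀ i ∈ S, ξ i = true) → (∀ i ∈ S, c i = 0) →
      (k = S.card + r) →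
      ∀ t : ℝ, |t| ≤ 1/(16*D^2) →
      ex μ (fun ξ => Real.exp (t * fce c ξ))
        ≤ Real.exp (t * ex μ (fce c) + (16/5)*D^2*t^2 * ex μ (fce c)) := by
  intro r
  induction r with
  | zero =>
    intro k μ c S hμ hhom hind hc0 hc1 hforce hcS hk t ht
    have hfz : ∀ ξ, μ ξ ≠ 0 → fce c ξ = 0 := by
      intro ξ hz
      have hsub : S ⊆ Finset.univ.filter fun i => ξ i = true := by
        intro i hi
        rw [Finset.mem_filter]
        exact ⟨Finset.mem_univ i, hforce ξ hz i hi⟩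
      have hSeq : (Finset.univ.filter fun i => ξ i = true) = S :=
        (Finset.eq_of_subset_of_card_le hsub (by rw [hhom ξ hz, hk]; omega)).symm
      have h2 : fce c ξ = ∑ i ∈ Finset.univ.filter fun i => ξ i = true, c i := by
        unfold fce
        rw [Finset.sum_filter]
        refine Finset.sum_congr rfl fun i _ => ?_
        by_cases hi : ξ i = true <;> simp [hi]
      rw [h2, hSeq]
      exact Finset.sum_eq_zero hcS
    have hm : ex μ (fce c) = 0 := by
      unfold ex
      refine Finset.sum_eq_zero fun ξ _ => ?_
      by_cases hz : μ ξ = 0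
      · rw [hz, zero_mul]
      · rw [hfz ξ hz, mul_zero]
    have hex : ex μ (fun ξ => Real.exp (t * fce c ξ)) = 1 := by
      have h3 : ∀ ξ : Fin n → Bool, μ ξ * Real.exp (t * fce c ξ) = μ ξ := by
        intro ξ
        by_cases hz : μ ξ = 0
        · simp [hz]
        · rw [hfz ξ hz, mul_zero, Real.exp_zero, mul_one]
      unfold ex
      rw [Finset.sum_congr rfl fun ξ _ => h3 ξ, hμ.2]
    rw [hex, hm]
    simp
  | succ r IH =>
    intro k μ c S hμ hhom hind hc0 hc1 hforce hcS hk t ht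
    have hD0 : (0:ℝ) < D := lt_of_lt_of_le one_pos hD
    have hD2 : (0:ℝ) < 16*D^2 := by positivity
    have hta : |t| * (16*D^2) ≤ 1 := by
      rw [← le_div_iff₀ hD2]; exact ht
    have ha0 : (0:ℝ) ≤ |t| := abs_nonneg t
    set m := ex μ (fce c) with hmdef
    have hm0 : 0 ≤ m := ex_fce_nonneg hμ.1 hc0
    set γ : ℝ := (16/5)*D^2 with hγdef
    set A : ℝ := t + γ*t^2 with hAdef
    set B : ℝ := γ*t^2 with hBdef
    have hB0 : 0 ≤ B := by rw [hBdef, hγdef]; positivity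
    set y : Fin n → ℝ := fun v => ex (cnd μ v) (fce c) with hydef
    set z : Fin n → ℝ := fun v => A * (y v - m) - B * c v with hzdef
    set F : ℝ := t * m + γ*t^2 * m with hFdef
    -- numeric facts
    have habs_s : |A| ≤ (6/5) * |t| := by
      have h1 : |A| ≤ |t| + γ*t^2 := by
        rw [hAdef]
        refine (abs_add_le _ _).trans ?_
        have : |γ*t^2| = γ*t^2 := abs_of_nonneg (by rw [hγdef]; positivity)
        rw [this]
      have h2 : γ*t^2 ≤ (1/5) * |t| := by
        rw [hγdef]
        have h3 : t^2 = |t| * |t| := by rw [← sq_abs t]; ring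
        nlinarith [hta, ha0]
      linarith
    have hB_le : B ≤ (1/5) * |t| := by
      rw [hBdef, hγdef]
      have h3 : t^2 = |t| * |t| := by rw [← sq_abs t]; ring
      nlinarith [hta, ha0]
    have htD : |t| * D ≤ 1/16 := by nlinarith [hta, ha0, hD, hD0]
    -- the per-v bound
    have hvb : ∀ v ∈ Finset.univ \ S,
        marg μ v * ex (cnd μ v) (fun ξ => Real.exp (t * fce c ξ))
          ≤ marg μ v * (Real.exp F * (1 + z v + (z v)^2)) := by
      intro v hv
      rcases eq_or_lt_of_le (marg_nonneg hμ.1 v) with hp | hp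
      · rw [← hp, zero_mul, zero_mul]
      · refine mul_le_mul_of_nonneg_left ?_ hp.le
        have hvS : v ∉ S := (Finset.mem_sdiff.1 hv).2
        have hdv : |y v - m| ≤ D := dev_pointwise hμ hind hc0 hc1 hp
        -- hypotheses for IH
        have hc0' : ∀ i, 0 ≤ Function.update c v 0 i := by
          intro i
          rcases eq_or_ne i v with h | h
          · rw [h, Function.update_self]
          · rw [Function.update_of_ne h]; exact hc0 i
        have hc1' : ∀ i, Function.update c v 0 i ≤ 1 := by
          intro i
          rcases eq_or_ne i v with h | h
          · rw [h, Function.update_self]; norm_num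
          · rw [Function.update_of_ne h]; exact hc1 i
        have hforce' : ∀ ξ, cnd μ v ξ ≠ 0 → ∀ i ∈ insert v S, ξ i = true := by
          intro ξ hz i hi
          rcases Finset.mem_insert.1 hi with h | h
          · rw [h]; exact (cnd_ne_zero hz).2
          · exact hforce ξ (cnd_ne_zero hz).1 i h
        have hcS' : ∀ i ∈ insert v S, Function.update c v 0 i = 0 := by
          intro i hi
          rcases eq_or_ne i v with h | h
          · rw [h, Function.update_self]
          · rw [Function.update_of_ne h]
            exact hcS i ((Finset.mem_insert.1 hi).resolve_left h)
        have hcard' : k = (insert v S).card + r := by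
          rw [Finset.card_insert_of_notMem hvS]
          omega
        have hIH := IH k (cnd μ v) (Function.update c v 0) (insert v S)
          (cnd_isDistrib hμ hp) (cnd_homog hhom) (cnd_linf hind hp)
          hc0' hc1' hforce' hcS' hcard' t ht
        have hsplitm : ex (cnd μ v) (fce (Function.update c v 0)) = y v - c v := by
          have := ex_cnd_fce_split hμ hp c
          rw [hydef]
          simp only []
          linarith
        rw [hsplitm] at hIH
        have hzb : |z v| ≤ 1 := by
          have h1 : |z v| ≤ |A| * |y v - m| + B * c v := by
            rw [hzdef]
            simp only []
            refine (abs_sub _ _).trans ?_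
            rw [abs_mul, abs_mul, abs_of_nonneg hB0, abs_of_nonneg (hc0 v)]
          have h2 : |A| * |y v - m| ≤ (6/5)*|t| * D := by
            refine mul_le_mul habs_s hdv (abs_nonneg _) (by positivity)
          have h3 : B * c v ≤ (1/5) * |t| := by
            refine (mul_le_of_le_one_right hB0 (hc1 v)).trans hB_le
          have h4 : (6/5)*|t| * D ≤ 6/80 := by
            calc (6/5)*|t| * D = (6/5) * (|t| * D) := by ring
              _ ≤ (6/5) * (1/16) := by linarith
              _ = 6/80 := by norm_num
          have h5 : (1/5)*|t| ≤ 1/80 := by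
            have : |t| ≤ 1/16 := by nlinarith [hta, hD, hD0]
            linarith
          linarith
        calc ex (cnd μ v) (fun ξ => Real.exp (t * fce c ξ))
            = Real.exp (t * c v)
              * ex (cnd μ v) (fun ξ => Real.exp (t * fce (Function.update c v 0) ξ)) :=
              ex_cnd_exp_split c t
          _ ≤ Real.exp (t * c v)
              * Real.exp (t * (y v - c v) + (16/5)*D^2*t^2 * (y v - c v)) :=
              mul_le_mul_of_nonneg_left hIH (Real.exp_nonneg _)
          _ = Real.exp (F + z v) := by
              rw [← Real.exp_add]
              congr 1
              rw [hFdef, hzdef]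
              simp only []
              rw [hAdef, hBdef, hγdef]
              ring
          _ ≤ Real.exp F * (1 + z v + (z v)^2) := by
              rw [Real.exp_add]
              exact mul_le_mul_of_nonneg_left (exp_quad hzb) (Real.exp_nonneg _)
    -- assemble
    have hrev_exp := reveal hμ hhom hforce hk (fun ξ => Real.exp (t * fce c ξ))
    have hrev_fce := reveal hμ hhom hforce hk (fce c)
    have hsum_p := sum_marg_sdiff hμ hhom hforce hk
    have hsum_pc := sum_marg_c_sdiff c hcS (μ := μ)
    have hdev := dev_weighted (S := S) hμ hind hc0
    have hK0 : (0:ℝ) < ((r+1 : ℕ) : ℝ) := by exact_mod_cast Nat.succ_pos r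
    have hsum_py : ∑ v ∈ Finset.univ \ S, marg μ v * (y v - m)  = 0 := by
      have h1 : ∑ v ∈ Finset.univ \ S, marg μ v * (y v - m)
          = (∑ v ∈ Finset.univ \ S, marg μ v * y v)
            - (∑ v ∈ Finset.univ \ S, marg μ v) * m := by
        rw [Finset.sum_mul, ← Finset.sum_sub_distrib]
        exact Finset.sum_congr rfl fun v _ => by ring
      rw [h1, hrev_fce, hsum_p]
      ring
    have hPz : ∑ v ∈ Finset.univ \ S, marg μ v * z v = -(B * m) := by
      calc ∑ v ∈ Finset.univ \ S, marg μ v * z v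
          = A * (∑ v ∈ Finset.univ \ S, marg μ v * (y v - m))
            - B * (∑ v ∈ Finset.univ \ S, c v * marg μ v) := by
            rw [Finset.mul_sum, Finset.mul_sum, ← Finset.sum_sub_distrib]
            refine Finset.sum_congr rfl fun v _ => ?_
            simp only [hzdef]
            ring
        _ = -(B * m) := by rw [hsum_py, hsum_pc]; ring
    have hPd2 : ∑ v ∈ Finset.univ \ S, marg μ v * (y v - m)^2 ≤ D * (D * m) := by
      have h1 : ∀ v ∈ Finset.univ \ S,
          marg μ v * (y v - m)^2 ≤ D * (marg μ v * |y v - m|) := by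
        intro v hv
        rcases eq_or_lt_of_le (marg_nonneg hμ.1 v) with hp | hp
        · rw [← hp]; simp
        · have hdv : |y v - m| ≤ D := dev_pointwise hμ hind hc0 hc1 hp
          have h2 : (y v - m)^2 = |y v - m| * |y v - m| := by rw [← sq_abs]; ring
          calc marg μ v * (y v - m)^2 = marg μ v * (|y v - m| * |y v - m|) := by rw [h2]
            _ ≤ marg μ v * (D * |y v - m|) := by
                refine mul_le_mul_of_nonneg_left ?_ hp.le
                exact mul_le_mul_of_nonneg_right hdv (abs_nonneg _)
            _ = D * (marg μ v * |y v - m|) := by ring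
      calc ∑ v ∈ Finset.univ \ S, marg μ v * (y v - m)^2
          ≤ ∑ v ∈ Finset.univ \ S, D * (marg μ v * |y v - m|) :=
            Finset.sum_le_sum h1
        _ = D * ∑ v ∈ Finset.univ \ S, marg μ v * |y v - m| := by rw [Finset.mul_sum]
        _ ≤ D * (D * m) := mul_le_mul_of_nonneg_left hdev hD0.le
    have hPdc : ∑ v ∈ Finset.univ \ S, marg μ v * (|y v - m| * c v) ≤ D * m := by
      have h1 : ∀ v ∈ Finset.univ \ S,
          marg μ v * (|y v - m| * c v) ≤ D * (c v * marg μ v) := by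
        intro v hv
        rcases eq_or_lt_of_le (marg_nonneg hμ.1 v) with hp | hp
        · rw [← hp]; simp
        · have hdv : |y v - m| ≤ D := dev_pointwise hμ hind hc0 hc1 hp
          calc marg μ v * (|y v - m| * c v) ≤ marg μ v * (D * c v) := by
                refine mul_le_mul_of_nonneg_left ?_ hp.le
                exact mul_le_mul_of_nonneg_right hdv (hc0 v)
            _ = D * (c v * marg μ v) := by ring
      calc ∑ v ∈ Finset.univ \ S, marg μ v * (|y v - m| * c v)
          ≤ ∑ v ∈ Finset.univ \ S, D * (c v * marg μ v) := Finset.sum_le_sum h1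
        _ = D * ∑ v ∈ Finset.univ \ S, c v * marg μ v := by rw [Finset.mul_sum]
        _ = D * m := by rw [hsum_pc]
    have hPc2 : ∑ v ∈ Finset.univ \ S, marg μ v * (c v)^2 ≤ m := by
      have h1 : ∀ v ∈ Finset.univ \ S, marg μ v * (c v)^2 ≤ c v * marg μ v := by
        intro v hv
        have hpn := marg_nonneg hμ.1 v
        calc marg μ v * (c v)^2 = marg μ v * (c v * c v) := by ring
          _ ≤ marg μ v * (c v * 1) := by
              refine mul_le_mul_of_nonneg_left ?_ hpn
              exact mul_le_mul_of_nonneg_left (hc1 v) (hc0 v)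
          _ = c v * marg μ v := by ring
      calc ∑ v ∈ Finset.univ \ S, marg μ v * (c v)^2
          ≤ ∑ v ∈ Finset.univ \ S, c v * marg μ v := Finset.sum_le_sum h1
        _ = m := hsum_pc
    have hPz2 : ∑ v ∈ Finset.univ \ S, marg μ v * (z v)^2
        ≤ (49/25) * (D^2 * (t^2 * m)) := by
      have hper : ∀ v ∈ Finset.univ \ S, marg μ v * (z v)^2
          ≤ marg μ v * ((6/5*|t|)^2 * (y v - m)^2
              + 2*(6/5*|t|)*B * (|y v - m| * c v) + B^2 * (c v)^2) := by
        intro v hv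
        refine mul_le_mul_of_nonneg_left ?_ (marg_nonneg hμ.1 v)
        have h1 : |z v| ≤ (6/5*|t|) * |y v - m| + B * c v := by
          have h2 : |z v| ≤ |A| * |y v - m| + B * c v := by
            rw [hzdef]
            simp only []
            refine (abs_sub _ _).trans ?_
            rw [abs_mul, abs_mul, abs_of_nonneg hB0, abs_of_nonneg (hc0 v)]
          have h3 : |A| * |y v - m| ≤ (6/5*|t|) * |y v - m| :=
            mul_le_mul_of_nonneg_right habs_s (abs_nonneg _)
          linarith
        have h4 : (z v)^2 ≤ ((6/5*|t|) * |y v - m| + B * c v)^2 := by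
          rw [← sq_abs (z v)]
          refine pow_le_pow_left₀ (abs_nonneg _) h1 2
        have h5 : (y v - m)^2 = |y v - m|^2 := (sq_abs _).symm
        nlinarith [h4, abs_nonneg (y v - m), hc0 v, hB0, ha0]
      calc ∑ v ∈ Finset.univ \ S, marg μ v * (z v)^2
          ≤ ∑ v ∈ Finset.univ \ S, marg μ v * ((6/5*|t|)^2 * (y v - m)^2
              + 2*(6/5*|t|)*B * (|y v - m| * c v) + B^2 * (c v)^2) :=
            Finset.sum_le_sum hper
        _ = (6/5*|t|)^2 * (∑ v ∈ Finset.univ \ S, marg μ v * (y v - m)^2)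
            + 2*(6/5*|t|)*B * (∑ v ∈ Finset.univ \ S, marg μ v * (|y v - m| * c v))
            + B^2 * (∑ v ∈ Finset.univ \ S, marg μ v * (c v)^2) := by
            rw [Finset.mul_sum, Finset.mul_sum, Finset.mul_sum, ← Finset.sum_add_distrib,
              ← Finset.sum_add_distrib]
            exact Finset.sum_congr rfl fun v _ => by ring
        _ ≤ (6/5*|t|)^2 * (D * (D * m)) + 2*(6/5*|t|)*B * (D * m) + B^2 * m := by
            have k1 : (0:ℝ) ≤ (6/5*|t|)^2 := by positivity
            have k2 : (0:ℝ) ≤ 2*(6/5*|t|)*B := by positivity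
            have k3 : (0:ℝ) ≤ B^2 := by positivity
            have := mul_le_mul_of_nonneg_left hPd2 k1
            have := mul_le_mul_of_nonneg_left hPdc k2
            have := mul_le_mul_of_nonneg_left hPc2 k3
            linarith
        _ ≤ (49/25) * (D^2 * (t^2 * m)) := by
            have hsq : t^2 = |t| * |t| := by rw [← sq_abs t]; ring
            have e1 : (6/5*|t|)^2 * (D * (D * m)) = (36/25) * (D^2*(t^2*m)) := by
              rw [hsq]; ring
            have e2 : 2*(6/5*|t|)*B * (D * m) ≤ (12/25) * (D^2*(t^2*m)) := by
              rw [hBdef, hγdef, hsq]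
              have hx : |t| * D * (|t| * |t| * (D^2 * m))
                  ≤ (1/16) * (|t| * |t| * (D^2 * m)) :=
                mul_le_mul_of_nonneg_right htD (by positivity)
              linarith
            have e3 : B^2 * m ≤ (1/25) * (D^2*(t^2*m)) := by
              rw [hBdef, hγdef, hsq]
              have hx0 : (0:ℝ) ≤ |t| * (16*D^2) := by positivity
              have hq : (|t| * (16*D^2)) * (|t| * (16*D^2)) ≤ 1 := by
                nlinarith [hta, hx0]
              have hD2' : (1:ℝ) ≤ D^2 := by nlinarith [hD, hD0]
              have hDD : D^2 ≤ D^4 := by nlinarith [hD2', sq_nonneg D]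
              have hy : (0:ℝ) ≤ |t| * |t| := mul_nonneg ha0 ha0
              have hz2 : (D^4 - D^2) * (|t| * |t|) ≥ 0 :=
                mul_nonneg (by linarith) hy
              have hq2 : 256 * (D^2 * (|t| * |t|)) ≤ 1 := by nlinarith [hq, hz2]
              have hx : (256 * (D^2 * (|t| * |t|))) * (D^2 * (|t| * |t|) * m)
                  ≤ 1 * (D^2 * (|t| * |t|) * m) :=
                mul_le_mul_of_nonneg_right hq2 (by positivity)
              linarith
            linarith
    -- combine everything
    have hfinal : ((r+1:ℕ):ℝ) * ex μ (fun ξ => Real.exp (t * fce c ξ))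
        ≤ ((r+1:ℕ):ℝ) * Real.exp F := by
      calc ((r+1:ℕ):ℝ) * ex μ (fun ξ => Real.exp (t * fce c ξ))
          = ∑ v ∈ Finset.univ \ S, marg μ v
              * ex (cnd μ v) (fun ξ => Real.exp (t * fce c ξ)) := hrev_exp.symm
        _ ≤ ∑ v ∈ Finset.univ \ S, marg μ v * (Real.exp F * (1 + z v + (z v)^2)) :=
            Finset.sum_le_sum hvb
        _ = Real.exp F * ∑ v ∈ Finset.univ \ S,
              (marg μ v + marg μ v * z v + marg μ v * (z v)^2) := by
            rw [Finset.mul_sum]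
            exact Finset.sum_congr rfl fun v _ => by ring
        _ = Real.exp F * ((∑ v ∈ Finset.univ \ S, marg μ v)
              + (∑ v ∈ Finset.univ \ S, marg μ v * z v)
              + ∑ v ∈ Finset.univ \ S, marg μ v * (z v)^2) := by
            rw [Finset.sum_add_distrib, Finset.sum_add_distrib]
        _ ≤ Real.exp F * (((r+1:ℕ):ℝ) + 0) := by
            refine mul_le_mul_of_nonneg_left ?_ (Real.exp_nonneg _)
            rw [hsum_p, hPz]
            have hBm : (49/25) * (D^2 * (t^2 * m)) ≤ B * m := by
              rw [hBdef, hγdef]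
              nlinarith [hm0, sq_nonneg t, sq_nonneg D,
                mul_nonneg (mul_nonneg (sq_nonneg D) (sq_nonneg t)) hm0]
            have := hPz2
            linarith
        _ = ((r+1:ℕ):ℝ) * Real.exp F := by ring
    have := (mul_le_mul_iff_right₀ hK0).1 hfinal
    rw [hFdef] at this
    rw [hγdef] at this
    exact this
/-! ### Chernoff–Markov inequalities -/

lemma le_pr_of {μ : (Fin n → Bool) → ℝ} (h0 : ∀ ξ, 0 ≤ μ ξ)
    {P : (Fin n → Bool) → Prop} {ξ₀ : Fin n → Bool} (hP : P ξ₀) :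
    μ ξ₀ ≤ pr μ P := by
  unfold pr
  have h := Finset.single_le_sum (f := fun ξ => if P ξ then μ ξ else 0)
    (fun ξ _ => by
      by_cases hξ : P ξ
      · rw [if_pos hξ]; exact h0 ξ
      · rw [if_neg hξ])
    (Finset.mem_univ ξ₀)
  rwa [if_pos hP] at h

lemma chernoff_upper {μ : (Fin n → Bool) → ℝ} (hμ : IsDistrib μ) (c : Fin n → ℝ)
    {t : ℝ} (θ : ℝ) (ht : 0 ≤ t) :
    pr μ (fun ξ => θ ≤ fce c ξ)
      ≤ Real.exp (-(t*θ)) * ex μ (fun ξ => Real.exp (t * fce c ξ)) := by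
  unfold pr ex
  rw [Finset.mul_sum]
  refine Finset.sum_le_sum fun ξ _ => ?_
  by_cases hE : θ ≤ fce c ξ
  · rw [if_pos hE]
    have h1 : (1:ℝ) ≤ Real.exp (-(t*θ)) * Real.exp (t * fce c ξ) := by
      rw [← Real.exp_add]
      refine Real.one_le_exp ?_
      have := mul_le_mul_of_nonneg_left hE ht
      linarith
    calc μ ξ = μ ξ * 1 := (mul_one _).symm
      _ ≤ μ ξ * (Real.exp (-(t*θ)) * Real.exp (t * fce c ξ)) :=
          mul_le_mul_of_nonneg_left h1 (hμ.1 ξ)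
      _ = Real.exp (-(t*θ)) * (μ ξ * Real.exp (t * fce c ξ)) := by ring
  · rw [if_neg hE]
    exact mul_nonneg (Real.exp_nonneg _) (mul_nonneg (hμ.1 ξ) (Real.exp_nonneg _))

lemma chernoff_lower {μ : (Fin n → Bool) → ℝ} (hμ : IsDistrib μ) (c : Fin n → ℝ)
    {t : ℝ} (θ : ℝ) (ht : 0 ≤ t) :
    pr μ (fun ξ => fce c ξ ≤ θ)
      ≤ Real.exp (t*θ) * ex μ (fun ξ => Real.exp ((-t) * fce c ξ)) := by
  unfold pr ex
  rw [Finset.mul_sum]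
  refine Finset.sum_le_sum fun ξ _ => ?_
  by_cases hE : fce c ξ ≤ θ
  · rw [if_pos hE]
    have h1 : (1:ℝ) ≤ Real.exp (t*θ) * Real.exp ((-t) * fce c ξ) := by
      rw [← Real.exp_add]
      refine Real.one_le_exp ?_
      have := mul_le_mul_of_nonneg_left hE ht
      linarith
    calc μ ξ = μ ξ * 1 := (mul_one _).symm
      _ ≤ μ ξ * (Real.exp (t*θ) * Real.exp ((-t) * fce c ξ)) :=
          mul_le_mul_of_nonneg_left h1 (hμ.1 ξ)
      _ = Real.exp (t*θ) * (μ ξ * Real.exp ((-t) * fce c ξ)) := by ring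
  · rw [if_neg hE]
    exact mul_nonneg (Real.exp_nonneg _) (mul_nonneg (hμ.1 ξ) (Real.exp_nonneg _))

/-! ### The dichotomy: non-degenerate support forces `1 ≤ D` -/

lemma cm_nonneg {μ : (Fin n → Bool) → ℝ} (h0 : ∀ ξ, 0 ≤ μ ξ)
    (T : Finset (Fin n)) (j : Fin n) : 0 ≤ cm μ T j :=
  div_nonneg (pr_nonneg h0 _) (pr_nonneg h0 _)

lemma sum_cm_eq_k {μ : (Fin n → Bool) → ℝ} {k : ℕ} (hhom : Homog μ k)
    (T : Finset (Fin n)) (hP : 0 < pr μ (condOn T)) :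
    ∑ j, cm μ T j = (k : ℝ) := by
  unfold cm
  rw [← Finset.sum_div, div_eq_iff (ne_of_gt hP)]
  have h1 : ∀ j : Fin n, pr μ (fun ξ => condOn T ξ ∧ ξ j = true)
      = ∑ ξ, (if condOn T ξ then μ ξ else 0) * (if ξ j = true then (1:ℝ) else 0) := by
    intro j
    unfold pr
    refine Finset.sum_congr rfl fun ξ _ => ?_
    by_cases hc : condOn T ξ <;> by_cases hj : ξ j = true <;> simp [hc, hj]
  rw [Finset.sum_congr rfl fun j _ => h1 j, Finset.sum_comm]
  have h2 : ∀ ξ : Fin n → Bool,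
      ∑ j, (if condOn T ξ then μ ξ else 0) * (if ξ j = true then (1:ℝ) else 0)
        = (if condOn T ξ then μ ξ else 0) * (k:ℝ) := by
    intro ξ
    rw [← Finset.mul_sum, sum_ones]
    by_cases hc : condOn T ξ
    · rw [if_pos hc]
      by_cases hz : μ ξ = 0
      · rw [hz, zero_mul, zero_mul]
      · rw [hhom ξ hz]
    · rw [if_neg hc, zero_mul, zero_mul]
  rw [Finset.sum_congr rfl fun ξ _ => h2 ξ, ← Finset.sum_mul]
  rw [mul_comm]
  rfl

lemma cm_mem_one {μ : (Fin n → Bool) → ℝ} {T : Finset (Fin n)}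
    (hP : 0 < pr μ (condOn T)) {v : Fin n} (hv : v ∈ T) : cm μ T v = 1 := by
  unfold cm
  rw [pr_congr (Q := condOn T) fun ξ => ⟨fun h => h.1, fun h => ⟨h, h v hv⟩⟩]
  exact div_self (ne_of_gt hP)

lemma one_le_D_of_two {μ : (Fin n → Bool) → ℝ} {D : ℝ} {k : ℕ}
    (hμ : IsDistrib μ) (hhom : Homog μ k) (hind : LinfIndep μ D)
    {ξ₁ ξ₂ : Fin n → Bool} (h1 : μ ξ₁ ≠ 0) (h2 : μ ξ₂ ≠ 0) (hne : ξ₁ ≠ ξ₂) :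
    1 ≤ D := by
  set A : Finset (Fin n) := Finset.univ.filter (fun i => ξ₁ i = true) with hAdef
  set Bs : Finset (Fin n) := Finset.univ.filter (fun i => ξ₂ i = true) with hBdef
  have hAk : A.card = k := hhom ξ₁ h1
  have hBk : Bs.card = k := hhom ξ₂ h2
  set S : Finset (Fin n) := A ∩ Bs with hSdef
  have hSA : S ⊆ A := Finset.inter_subset_left
  have hSB : S ⊆ Bs := Finset.inter_subset_right
  have hmemA : ∀ i, i ∈ A ↔ ξ₁ i = true := fun i => by
    rw [hAdef]; simp
  have hmemB : ∀ i, i ∈ Bs ↔ ξ₂ i = true := fun i => by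
    rw [hBdef]; simp
  have hcond1 : condOn S ξ₁ := fun i hi => (hmemA i).1 (hSA hi)
  have hcond2 : condOn S ξ₂ := fun i hi => (hmemB i).1 (hSB hi)
  have hμ1 : 0 < μ ξ₁ := lt_of_le_of_ne (hμ.1 ξ₁) (Ne.symm h1)
  have hμ2 : 0 < μ ξ₂ := lt_of_le_of_ne (hμ.1 ξ₂) (Ne.symm h2)
  have hP : 0 < pr μ (condOn S) := lt_of_lt_of_le hμ1 (le_pr_of hμ.1 hcond1)
  have hAB : A ≠ Bs := by
    intro hABeq
    apply hne
    funext i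
    have hiff : ξ₁ i = true ↔ ξ₂ i = true := by
      rw [← hmemA i, ← hmemB i, hABeq]
    cases hb : ξ₁ i <;> cases hc : ξ₂ i <;> simp_all
  have hSneA : S ≠ A := by
    intro hSAeq
    apply hAB
    have hsub : A ⊆ Bs := by
      rw [← hSAeq] at hSA ⊢
      intro i hi
      exact hSB (hSA hi)
    exact Finset.eq_of_subset_of_card_le hsub ((hBk.trans hAk.symm).le)
  have hScard : S.card < k := by
    rw [← hAk]
    exact Finset.card_lt_card (Finset.ssubset_iff_subset_ne.2 ⟨hSA, hSneA⟩)
  -- sums of conditional marginals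
  have hsumS : ∑ j, cm μ S j = (k:ℝ) := sum_cm_eq_k hhom S hP
  have hsum_inS : ∑ j ∈ S, cm μ S j = (S.card : ℝ) := by
    rw [Finset.sum_congr rfl (fun j hj => cm_mem_one hP hj)]
    simp
  have hsum_out : ∑ j ∈ Finset.univ \ S, cm μ S j = (k:ℝ) - S.card := by
    rw [Finset.sum_sdiff_eq_sub (Finset.subset_univ S), hsumS, hsum_inS]
  -- the union of the two difference sets
  set U : Finset (Fin n) := (A \ S) ∪ (Bs \ S) with hUdef
  have hUsub : U ⊆ Finset.univ \ S := by
    intro v hv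
    rw [Finset.mem_sdiff]
    refine ⟨Finset.mem_univ v, ?_⟩
    rcases Finset.mem_union.1 hv with h | h
    · exact (Finset.mem_sdiff.1 h).2
    · exact (Finset.mem_sdiff.1 h).2
  have hdisj : Disjoint (A \ S) (Bs \ S) := by
    rw [Finset.disjoint_left]
    intro v hvA hvB
    have : v ∈ S := Finset.mem_inter.2
      ⟨(Finset.mem_sdiff.1 hvA).1, (Finset.mem_sdiff.1 hvB).1⟩
    exact (Finset.mem_sdiff.1 hvA).2 this
  have hUcard : U.card = 2 * (k - S.card) := by
    rw [hUdef, Finset.card_union_of_disjoint hdisj,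
      Finset.card_sdiff_of_subset hSA, Finset.card_sdiff_of_subset hSB, hAk, hBk]
    omega
  have hUne : U.Nonempty := by
    rw [← Finset.card_pos, hUcard]
    omega
  -- find v* in U with small conditional marginal
  have hexists : ∃ v ∈ U, cm μ S v ≤ 1/2 := by
    by_contra hcon
    push_neg at hcon
    have hlt : ∑ v ∈ U, (1/2 : ℝ) < ∑ v ∈ U, cm μ S v :=
      Finset.sum_lt_sum_of_nonempty hUne fun v hv => hcon v hv
    have hle : ∑ v ∈ U, cm μ S v ≤ (k:ℝ) - S.card := by
      rw [← hsum_out]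
      exact Finset.sum_le_sum_of_subset_of_nonneg hUsub
        fun v _ _ => cm_nonneg hμ.1 S v
    rw [Finset.sum_const, hUcard] at hlt
    have : ((2 * (k - S.card) : ℕ) : ℝ) * (1/2) = (k:ℝ) - S.card := by
      push_cast [Nat.cast_sub hScard.le]
      ring
    rw [nsmul_eq_mul, this] at hlt
    linarith
  obtain ⟨v, hvU, hx⟩ := hexists
  have hx0 : 0 ≤ cm μ S v := cm_nonneg hμ.1 S v
  -- a support point containing both S and v
  have hwit : ∃ ξw, 0 < μ ξw ∧ condOn (insert v S) ξw := by
    rcases Finset.mem_union.1 hvU with h | h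
    · refine ⟨ξ₁, hμ1, ?_⟩
      intro i hi
      rcases Finset.mem_insert.1 hi with hh | hh
      · rw [hh]; exact (hmemA v).1 (Finset.mem_sdiff.1 h).1
      · exact hcond1 i hh
    · refine ⟨ξ₂, hμ2, ?_⟩
      intro i hi
      rcases Finset.mem_insert.1 hi with hh | hh
      · rw [hh]; exact (hmemB v).1 (Finset.mem_sdiff.1 h).1
      · exact hcond2 i hh
  obtain ⟨ξw, hμw, hcondw⟩ := hwit
  have hfeas : 0 < pr μ (condOn (insert v S)) :=
    lt_of_lt_of_le hμw (le_pr_of hμ.1 hcondw)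
  have hDbound := hind S v hfeas
  have hsum1 : ∑ j, cm μ (insert v S) j = (k:ℝ) := sum_cm_eq_k hhom _ hfeas
  have hone : cm μ (insert v S) v = 1 := cm_mem_one hfeas (Finset.mem_insert_self v S)
  have hsplit : ∑ j, |cm μ (insert v S) j - cm μ S j|
      = |cm μ (insert v S) v - cm μ S v|
        + ∑ j ∈ Finset.univ.erase v, |cm μ (insert v S) j - cm μ S j| :=
    (Finset.add_sum_erase _ (fun j => |cm μ (insert v S) j - cm μ S j|)
      (Finset.mem_univ v)).symm
  have hsum_erase : ∑ j ∈ Finset.univ.erase v, (cm μ (insert v S) j - cm μ S j)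
      = -(1 - cm μ S v) := by
    have h3 : (cm μ (insert v S) v - cm μ S v)
        + ∑ j ∈ Finset.univ.erase v, (cm μ (insert v S) j - cm μ S j)
        = ∑ j, (cm μ (insert v S) j - cm μ S j) :=
      Finset.add_sum_erase _ (fun j => cm μ (insert v S) j - cm μ S j)
        (Finset.mem_univ v)
    have h4 : ∑ j, (cm μ (insert v S) j - cm μ S j) = 0 := by
      rw [Finset.sum_sub_distrib, hsum1, hsumS]
      ring
    rw [h4] at h3
    rw [hone] at h3
    linarith
  have habs : |∑ j ∈ Finset.univ.erase v, (cm μ (insert v S) j - cm μ S j)|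
      ≤ ∑ j ∈ Finset.univ.erase v, |cm μ (insert v S) j - cm μ S j| :=
    Finset.abs_sum_le_sum_abs _ _
  rw [hsum_erase] at habs
  have hv1 : |cm μ (insert v S) v - cm μ S v| = 1 - cm μ S v := by
    rw [hone, abs_of_nonneg (by linarith)]
  have habs2 : |(-(1 - cm μ S v))| = 1 - cm μ S v := by
    rw [abs_neg, abs_of_nonneg (by linarith)]
  rw [habs2] at habs
  calc (1:ℝ) = 2 * (1/2 : ℝ) := by norm_num
    _ ≤ 2 * (1 - cm μ S v) := by linarith
    _ ≤ ∑ j, |cm μ (insert v S) j - cm μ S j| := by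
        rw [hsplit, hv1]
        linarith
    _ ≤ D := hDbound

set_option maxHeartbeats 1000000 in
/-- Scalar Chernoff bound from `ℓ∞`-independence: for `c_i ∈ [0,1]`, `f(ξ) = Σᵢcᵢξᵢ` and
`m = E[f(ξ)]`, both tails `Pr[f ≥ (1+δ)m]` and `Pr[f ≤ (1−δ)m]` are at most
`exp(−δ²m/(20D²))`. -/
theorem stmt16 {n k : ℕ} (μ : (Fin n → Bool) → ℝ) (D δ : ℝ) (hD : 0 < D)
    (hμ : IsDistrib μ) (hhom : Homog μ k) (hind : LinfIndep μ D)
    (c : Fin n → ℝ) (hc0 : ∀ i, 0 ≤ c i) (hc1 : ∀ i, c i ≤ 1)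
    (hδ0 : 0 ≤ δ) (hδ1 : δ ≤ 1) :
    (pr μ (fun ξ =>
        (1 + δ) * (∑ ζ : Fin n → Bool, μ ζ * ∑ i, c i * (if ζ i = true then (1 : ℝ) else 0))
          ≤ ∑ i, c i * (if ξ i = true then (1 : ℝ) else 0))
      ≤ Real.exp (-(δ ^ 2 *
          (∑ ζ : Fin n → Bool, μ ζ * ∑ i, c i * (if ζ i = true then (1 : ℝ) else 0)))
            / (20 * D ^ 2))) ∧
    (pr μ (fun ξ =>
        ∑ i, c i * (if ξ i = true then (1 : ℝ) else 0)
          ≤ (1 - δ) * (∑ ζ : Fin n → Bool, μ ζ * ∑ i, c i * (if ζ i = true then (1 : ℝ) else 0)))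
      ≤ Real.exp (-(δ ^ 2 *
          (∑ ζ : Fin n → Bool, μ ζ * ∑ i, c i * (if ζ i = true then (1 : ℝ) else 0)))
            / (20 * D ^ 2))) := by
  
  by_cases hdet : ∀ ξ₁ ξ₂ : Fin n → Bool, μ ξ₁ ≠ 0 → μ ξ₂ ≠ 0 → ξ₁ = ξ₂
  · -- degenerate (deterministic) case
    obtain ⟨ξ₀, hξ₀⟩ : ∃ ξ₀ : Fin n → Bool, μ ξ₀ ≠ 0 := by
      by_contra hno
      push_neg at hno
      have hzero : ∑ ξ : Fin n → Bool, μ ξ = 0 := Finset.sum_eq_zero fun ξ _ => hno ξ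
      rw [hμ.2] at hzero
      norm_num at hzero
    have hsupp : ∀ ξ, μ ξ ≠ 0 → ξ = ξ₀ := fun ξ h => hdet ξ ξ₀ h hξ₀
    have hm_eq : ex μ (fce c) = fce c ξ₀ := by
      unfold ex
      have h1 : ∀ ξ : Fin n → Bool, μ ξ * fce c ξ = μ ξ * fce c ξ₀ := by
        intro ξ
        by_cases hz : μ ξ = 0
        · rw [hz, zero_mul, zero_mul]
        · rw [hsupp ξ hz]
      rw [Finset.sum_congr rfl fun ξ _ => h1 ξ, ← Finset.sum_mul, hμ.2, one_mul]
    have hpr : ∀ P : (Fin n → Bool) → Prop, pr μ P = if P ξ₀ then 1 else 0 := by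
      intro P
      unfold pr
      have h1 : ∀ ξ : Fin n → Bool,
          (if P ξ then μ ξ else 0) = μ ξ * (if P ξ₀ then (1:ℝ) else 0) := by
        intro ξ
        by_cases hz : μ ξ = 0
        · by_cases hP : P ξ <;> simp [hz, hP]
        · rw [hsupp ξ hz]
          by_cases hP : P ξ₀ <;> simp [hP]
      rw [Finset.sum_congr rfl fun ξ _ => h1 ξ, ← Finset.sum_mul, hμ.2, one_mul]
    have hfc0 : 0 ≤ fce c ξ₀ := fce_nonneg hc0 ξ₀
    constructor
    · show pr μ (fun ξ => (1+δ) * ex μ (fce c) ≤ fce c ξ)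
        ≤ Real.exp (-(δ^2 * ex μ (fce c))/(20*D^2))
      rw [hpr]
      by_cases hE : (1+δ) * ex μ (fce c) ≤ fce c ξ₀
      · rw [if_pos hE]
        rw [hm_eq] at hE
        have hδm : δ * fce c ξ₀ = 0 :=
          le_antisymm (by nlinarith) (mul_nonneg hδ0 hfc0)
        have hz2 : -(δ^2 * ex μ (fce c))/(20*D^2) = 0 := by
          rw [hm_eq]
          have : δ^2 * fce c ξ₀ = δ * (δ * fce c ξ₀) := by ring
          rw [this, hδm, mul_zero, neg_zero, zero_div]
        rw [hz2, Real.exp_zero]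
      · rw [if_neg hE]
        exact (Real.exp_pos _).le
    · show pr μ (fun ξ => fce c ξ ≤ (1-δ) * ex μ (fce c))
        ≤ Real.exp (-(δ^2 * ex μ (fce c))/(20*D^2))
      rw [hpr]
      by_cases hE : fce c ξ₀ ≤ (1-δ) * ex μ (fce c)
      · rw [if_pos hE]
        rw [hm_eq] at hE
        have hδm : δ * fce c ξ₀ = 0 :=
          le_antisymm (by nlinarith) (mul_nonneg hδ0 hfc0)
        have hz2 : -(δ^2 * ex μ (fce c))/(20*D^2) = 0 := by
          rw [hm_eq]
          have : δ^2 * fce c ξ₀ = δ * (δ * fce c ξ₀) := by ring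
          rw [this, hδm, mul_zero, neg_zero, zero_div]
        rw [hz2, Real.exp_zero]
      · rw [if_neg hE]
        exact (Real.exp_pos _).le
  · -- non-degenerate case: 1 ≤ D
    push_neg at hdet
    obtain ⟨ξ₁, ξ₂, h1, h2, hne⟩ := hdet
    have hD1 : 1 ≤ D := one_le_D_of_two hμ hhom hind h1 h2 hne
    have hDne : D ≠ 0 := ne_of_gt hD
    set t := δ / (16*D^2) with htdef
    have ht0 : 0 ≤ t := div_nonneg hδ0 (by positivity)
    have hta : |t| ≤ 1/(16*D^2) := by
      rw [abs_of_nonneg ht0, htdef]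
      exact (div_le_div_iff_of_pos_right (show (0:ℝ) < 16*D^2 by positivity)).2 hδ1
    have hempty1 : ∀ ξ : Fin n → Bool, μ ξ ≠ 0 → ∀ i ∈ (∅ : Finset (Fin n)), ξ i = true := by
      intro ξ _ i hi
      exact absurd hi (Finset.notMem_empty i)
    have hempty2 : ∀ i ∈ (∅ : Finset (Fin n)), c i = 0 := by
      intro i hi
      exact absurd hi (Finset.notMem_empty i)
    have hkk : k = (∅ : Finset (Fin n)).card + k := by simp
    have hmgf_pos := mgf_aux hD1 k k μ c ∅ hμ hhom hind hc0 hc1 hempty1 hempty2 hkk t hta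
    have hmgf_neg := mgf_aux hD1 k k μ c ∅ hμ hhom hind hc0 hc1 hempty1 hempty2 hkk (-t)
      (by rwa [abs_neg])
    constructor
    · have hch := chernoff_upper hμ c (t := t) ((1+δ) * ex μ (fce c)) ht0
      have hfin : Real.exp (-(t*((1+δ) * ex μ (fce c))))
          * Real.exp (t * ex μ (fce c) + (16/5)*D^2*t^2 * ex μ (fce c))
          = Real.exp (-(δ^2 * ex μ (fce c))/(20*D^2)) := by
        rw [← Real.exp_add]
        congr 1
        rw [htdef]
        field_simp
        ring
      show pr μ (fun ξ => (1+δ) * ex μ (fce c) ≤ fce c ξ)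
        ≤ Real.exp (-(δ^2 * ex μ (fce c))/(20*D^2))
      calc pr μ (fun ξ => (1+δ) * ex μ (fce c) ≤ fce c ξ)
          ≤ Real.exp (-(t*((1+δ) * ex μ (fce c))))
              * ex μ (fun ξ => Real.exp (t * fce c ξ)) := hch
        _ ≤ Real.exp (-(t*((1+δ) * ex μ (fce c))))
              * Real.exp (t * ex μ (fce c) + (16/5)*D^2*t^2 * ex μ (fce c)) :=
            mul_le_mul_of_nonneg_left hmgf_pos (Real.exp_nonneg _)
        _ = Real.exp (-(δ^2 * ex μ (fce c))/(20*D^2)) := hfin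
    · have hch := chernoff_lower hμ c (t := t) ((1-δ) * ex μ (fce c)) ht0
      have hfin : Real.exp (t*((1-δ) * ex μ (fce c)))
          * Real.exp ((-t) * ex μ (fce c) + (16/5)*D^2*(-t)^2 * ex μ (fce c))
          = Real.exp (-(δ^2 * ex μ (fce c))/(20*D^2)) := by
        rw [← Real.exp_add]
        congr 1
        rw [htdef]
        field_simp
        ring
      show pr μ (fun ξ => fce c ξ ≤ (1-δ) * ex μ (fce c))
        ≤ Real.exp (-(δ^2 * ex μ (fce c))/(20*D^2))
      calc pr μ (fun ξ => fce c ξ ≤ (1-δ) * ex μ (fce c))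
          ≤ Real.exp (t*((1-δ) * ex μ (fce c)))
              * ex μ (fun ξ => Real.exp ((-t) * fce c ξ)) := hch
        _ ≤ Real.exp (t*((1-δ) * ex μ (fce c)))
              * Real.exp ((-t) * ex μ (fce c) + (16/5)*D^2*(-t)^2 * ex μ (fce c)) :=
            mul_le_mul_of_nonneg_left hmgf_neg (Real.exp_nonneg _)
        _ = Real.exp (-(δ^2 * ex μ (fce c))/(20*D^2)) := hfin
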